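/- Let A be an n×n nonnegative real matrix with all row sums nonzero, and let M > 0, N ≥ 0, k ≥ 0 be integers. Then the row-sum bound of order M+N is at least as tight as the Xu–Xu-type product bound: max_{1≤i≤n} r_i(A^{k+M+N}) / r_i(A^k) ≤ max over pairs (i,j) with a_{ij}^{(M)} > 0 of ( r_i(A^{k+M}) r_j(A^{k+N}) ) / ( r_i(A^k) r_j(A^k) ), and symmetrically min_{1≤i≤n} r_i(A^{k+M+N}) / r_i(A^k) ≥ min over pairs (i,j) with a_{ij}^{(M)} > 0 of ( r_i(A^{k+M}) r_j(A^{k+N}) ) / ( r_i(A^k) r_j(A^k) ). -/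

import Mathlib

/-!
Because `A ^ (k + M + N) = A ^ M * A ^ (k + N)` and `A ^ (k + M) = A ^ M * A ^ k`,
`r_i(A^{k+M+N}) / r_i(A^{k+M})` is the average of the ratios `r_j(A^{k+N}) / r_j(A^k)`
weighted by `a_{ij}^{(M)} r_j(A^k)`. It therefore lies between the smallest and the largest
of these ratios over the `j` with `a_{ij}^{(M)} > 0`; dividing by `r_i(A^k)` gives, for
every `i`, a pair `(i, j)` witnessing each of the two inequalities.
-/

open Matrix

/-- The spectral radius of a real square matrix: the maximum modulus of its
complex eigenvalues (elements of the spectrum of the matrix over `ℂ`). -/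
noncomputable def specRad {n : ℕ} (A : Matrix (Fin n) (Fin n) ℝ) : ℝ :=
  sSup ((fun μ : ℂ => ‖μ‖) '' spectrum ℂ (A.map (fun x : ℝ => (x : ℂ))))

/-- `rowSum A i` is the `i`-th row sum of `A`. -/
noncomputable def rowSum {n : ℕ} (A : Matrix (Fin n) (Fin n) ℝ) (i : Fin n) : ℝ :=
  ∑ j, A i j

/-- A square matrix is irreducible if it cannot be symmetrically permuted to a
nontrivial block upper-triangular form; equivalently, for every nonempty proper
subset `S` of indices there is a nonzero entry leading from `S` to its complement. -/
def IsIrred {n : ℕ} (A : Matrix (Fin n) (Fin n) ℝ) : Prop :=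
  ∀ S : Set (Fin n), S.Nonempty → S ≠ Set.univ → ∃ i ∈ S, ∃ j ∈ Sᶜ, A i j ≠ 0

namespace Finset

variable {ι : Type*} {s : Finset ι} {w d : ι → ℝ}

theorem exists_sum_mul_le_div_mul_sum (f : ι → ℝ) (hw : ∀ i ∈ s, 0 ≤ w i)
    (hd : ∀ i ∈ s, 0 < d i) (hs : ∃ i ∈ s, 0 < w i) :
    ∃ j ∈ s, 0 < w j ∧ ∑ i ∈ s, w i * f i ≤ f j / d j * ∑ i ∈ s, w i * d i := by
  obtain ⟨j, hj, hmax⟩ := (s.filter (0 < w ·)).exists_max_image (fun i => f i / d i)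
    (by simpa only [filter_nonempty_iff] using hs)
  rw [mem_filter] at hj
  refine ⟨j, hj.1, hj.2, ?_⟩
  rw [mul_sum]
  refine sum_le_sum fun i hi => ?_
  rcases (hw i hi).eq_or_lt with hwi | hwi
  · simp [← hwi]
  · have hfi : f i ≤ f j / d j * d i :=
      (div_le_iff₀ (hd i hi)).1 (hmax i (mem_filter.2 ⟨hi, hwi⟩))
    calc w i * f i ≤ w i * (f j / d j * d i) := mul_le_mul_of_nonneg_left hfi hwi.le
      _ = f j / d j * (w i * d i) := by ring

theorem exists_div_mul_sum_le_sum_mul (f : ι → ℝ) (hw : ∀ i ∈ s, 0 ≤ w i)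
    (hd : ∀ i ∈ s, 0 < d i) (hs : ∃ i ∈ s, 0 < w i) :
    ∃ j ∈ s, 0 < w j ∧ f j / d j * ∑ i ∈ s, w i * d i ≤ ∑ i ∈ s, w i * f i := by
  obtain ⟨j, hj, hwj, h⟩ := exists_sum_mul_le_div_mul_sum (-f) hw hd hs
  refine ⟨j, hj, hwj, ?_⟩
  simp only [Pi.neg_apply, mul_neg, sum_neg_distrib, neg_div, neg_mul] at h
  linarith

end Finset

section NonnegMatrix

variable {n : ℕ} {A : Matrix (Fin n) (Fin n) ℝ}

theorem rowSum_mul (B C : Matrix (Fin n) (Fin n) ℝ) (i : Fin n) :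
    rowSum (B * C) i = ∑ j, B i j * rowSum C j := by
  simp only [rowSum, mul_apply, Finset.mul_sum]
  exact Finset.sum_comm

theorem rowSum_pow_add (A : Matrix (Fin n) (Fin n) ℝ) (m p : ℕ) (i : Fin n) :
    rowSum (A ^ (m + p)) i = ∑ j, (A ^ m) i j * rowSum (A ^ p) j := by
  rw [pow_add, rowSum_mul]

theorem rowSum_pow_pos (hA : ∀ i j, 0 ≤ A i j) (hr : ∀ i, rowSum A i ≠ 0) (m : ℕ)
    (i : Fin n) : 0 < rowSum (A ^ m) i := by
  induction m generalizing i with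
  | zero => simp [rowSum, one_apply]
  | succ m ih =>
    obtain ⟨j, -, hj⟩ : ∃ j ∈ Finset.univ, 0 < A i j := by
      refine Finset.exists_lt_of_sum_lt ?_
      simpa only [Finset.sum_const_zero] using
        (Finset.sum_nonneg fun j _ => hA i j).lt_of_ne' (hr i)
    rw [pow_succ', rowSum_mul]
    exact Finset.sum_pos' (fun l _ => mul_nonneg (hA i l) (ih l).le)
      ⟨j, Finset.mem_univ j, mul_pos hj (ih j)⟩

theorem exists_pow_apply_pos (hA : ∀ i j, 0 ≤ A i j) (hr : ∀ i, rowSum A i ≠ 0) (m : ℕ)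
    (i : Fin n) : ∃ j ∈ Finset.univ, 0 < (A ^ m) i j := by
  refine Finset.exists_lt_of_sum_lt ?_
  rw [Finset.sum_const_zero]
  exact rowSum_pow_pos hA hr m i

theorem exists_rowSum_pow_div_le (hA : ∀ i j, 0 ≤ A i j) (hr : ∀ i, rowSum A i ≠ 0)
    (M N k : ℕ) (i : Fin n) :
    ∃ j, 0 < (A ^ M) i j ∧ rowSum (A ^ (k + M + N)) i / rowSum (A ^ k) i ≤
      rowSum (A ^ (k + M)) i * rowSum (A ^ (k + N)) j / (rowSum (A ^ k) i * rowSum (A ^ k) j) := by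
  obtain ⟨j, -, hj, hle⟩ := Finset.exists_sum_mul_le_div_mul_sum (rowSum (A ^ (k + N)))
    (fun j _ => pow_apply_nonneg hA M i j) (fun j _ => rowSum_pow_pos hA hr k j)
    (exists_pow_apply_pos hA hr M i)
  rw [← rowSum_pow_add, ← rowSum_pow_add] at hle
  refine ⟨j, hj, ?_⟩
  rw [show k + M + N = M + (k + N) by omega, show k + M = M + k by omega]
  calc rowSum (A ^ (M + (k + N))) i / rowSum (A ^ k) i
      ≤ rowSum (A ^ (k + N)) j / rowSum (A ^ k) j * rowSum (A ^ (M + k)) i / rowSum (A ^ k) i :=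
      div_le_div_of_nonneg_right hle (rowSum_pow_pos hA hr k i).le
    _ = _ := by ring

theorem exists_le_rowSum_pow_div (hA : ∀ i j, 0 ≤ A i j) (hr : ∀ i, rowSum A i ≠ 0)
    (M N k : ℕ) (i : Fin n) :
    ∃ j, 0 < (A ^ M) i j ∧
      rowSum (A ^ (k + M)) i * rowSum (A ^ (k + N)) j / (rowSum (A ^ k) i * rowSum (A ^ k) j) ≤
        rowSum (A ^ (k + M + N)) i / rowSum (A ^ k) i := by
  obtain ⟨j, -, hj, hle⟩ := Finset.exists_div_mul_sum_le_sum_mul (rowSum (A ^ (k + N)))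
    (fun j _ => pow_apply_nonneg hA M i j) (fun j _ => rowSum_pow_pos hA hr k j)
    (exists_pow_apply_pos hA hr M i)
  rw [← rowSum_pow_add, ← rowSum_pow_add] at hle
  refine ⟨j, hj, ?_⟩
  rw [show k + M + N = M + (k + N) by omega, show k + M = M + k by omega]
  calc rowSum (A ^ (M + k)) i * rowSum (A ^ (k + N)) j / (rowSum (A ^ k) i * rowSum (A ^ k) j)
      = rowSum (A ^ (k + N)) j / rowSum (A ^ k) j * rowSum (A ^ (M + k)) i /
          rowSum (A ^ k) i := by ring
    _ ≤ rowSum (A ^ (M + (k + N))) i / rowSum (A ^ k) i :=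
      div_le_div_of_nonneg_right hle (rowSum_pow_pos hA hr k i).le

end NonnegMatrix

theorem stmt14_general {n : ℕ} [NeZero n] (A : Matrix (Fin n) (Fin n) ℝ)
    (hA : ∀ i j, 0 ≤ A i j) (hr : ∀ i, rowSum A i ≠ 0) (M N k : ℕ) :
    Finset.univ.sup' Finset.univ_nonempty
        (fun i => rowSum (A ^ (k + M + N)) i / rowSum (A ^ k) i) ≤
      sSup {x : ℝ | ∃ i j : Fin n, 0 < (A ^ M) i j ∧
        x = rowSum (A ^ (k + M)) i * rowSum (A ^ (k + N)) j /
              (rowSum (A ^ k) i * rowSum (A ^ k) j)} ∧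
    sInf {x : ℝ | ∃ i j : Fin n, 0 < (A ^ M) i j ∧
        x = rowSum (A ^ (k + M)) i * rowSum (A ^ (k + N)) j /
              (rowSum (A ^ k) i * rowSum (A ^ k) j)} ≤
      Finset.univ.inf' Finset.univ_nonempty
        (fun i => rowSum (A ^ (k + M + N)) i / rowSum (A ^ k) i) := by
  set bound : Fin n → Fin n → ℝ := fun i j =>
    rowSum (A ^ (k + M)) i * rowSum (A ^ (k + N)) j / (rowSum (A ^ k) i * rowSum (A ^ k) j)
  have hfin : {x : ℝ | ∃ i j : Fin n, 0 < (A ^ M) i j ∧ x = bound i j}.Finite :=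
    (Set.finite_range (Function.uncurry bound)).subset <| by
      rintro _ ⟨i, j, -, rfl⟩
      exact ⟨(i, j), rfl⟩
  constructor
  · refine Finset.sup'_le _ _ fun i _ => ?_
    obtain ⟨j, hj, hle⟩ := exists_rowSum_pow_div_le hA hr M N k i
    exact hle.trans (le_csSup hfin.bddAbove ⟨i, j, hj, rfl⟩)
  · refine Finset.le_inf' _ _ fun i _ => ?_
    obtain ⟨j, hj, hle⟩ := exists_le_rowSum_pow_div hA hr M N k i
    exact (csInf_le hfin.bddBelow ⟨i, j, hj, rfl⟩).trans hle

/-- remark after Theorem 7 of the paper.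
For a nonnegative matrix `A` with nonzero row sums and `M > 0`, `N ≥ 0`, `k ≥ 0`, the
order-`(M+N)` row-sum bound is at least as tight as the Xu–Xu-type product bound:
`max_i r_i(A^{k+M+N})/r_i(A^k)` is at most the max over pairs `(i,j)` with
`(A^M)_{ij} > 0` of `r_i(A^{k+M}) r_j(A^{k+N}) / (r_i(A^k) r_j(A^k))`, and symmetrically
for the minima. -/
theorem stmt14 {n : ℕ} [NeZero n] (A : Matrix (Fin n) (Fin n) ℝ)
    (hA : ∀ i j, 0 ≤ A i j) (hr : ∀ i, rowSum A i ≠ 0) (M N k : ℕ) (hM : 0 < M) :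
    Finset.univ.sup' Finset.univ_nonempty
        (fun i => rowSum (A ^ (k + M + N)) i / rowSum (A ^ k) i) ≤
      sSup {x : ℝ | ∃ i j : Fin n, 0 < (A ^ M) i j ∧
        x = rowSum (A ^ (k + M)) i * rowSum (A ^ (k + N)) j /
              (rowSum (A ^ k) i * rowSum (A ^ k) j)} ∧
    sInf {x : ℝ | ∃ i j : Fin n, 0 < (A ^ M) i j ∧
        x = rowSum (A ^ (k + M)) i * rowSum (A ^ (k + N)) j /
              (rowSum (A ^ k) i * rowSum (A ^ k) j)} ≤
      Finset.univ.inf' Finset.univ_nonempty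
        (fun i => rowSum (A ^ (k + M + N)) i / rowSum (A ^ k) i) :=
  stmt14_general A hA hr M N k
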